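/- arXiv:2510.06501 — 2 statements merged into one kernel-verified Lean document; each statement's English description precedes it below -/
import Mathlib

section
/- Fix β > 1, θ₀ ∈ ℝ^d, m = tanh(βm) with m > 0, and let the mixture P_{θ₀} be as above. Then E_{P_{θ₀}}[X Xᵀ tanh(βm + θ₀ᵀX)] = m(I_d + θ₀θ₀ᵀ). -/
open MeasureTheory
open scoped RealInnerProductSpace ENNReal

/-- The multivariate Gaussian measure `N_d(μ, I_d)` on `ℝ^d`. -/
noncomputable def gaussian (d : ℕ) (μ : EuclideanSpace ℝ (Fin d)) :
    Measure (EuclideanSpace ℝ (Fin d)) :=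
  volume.withDensity
    (fun x => ENNReal.ofReal ((2 * Real.pi) ^ (-(d : ℝ) / 2) * Real.exp (-‖x - μ‖ ^ 2 / 2)))

/-- The asymmetric two-component Gaussian mixture
`P_{θ₀} = ((1+m)/2) N_d(θ₀, I_d) + ((1−m)/2) N_d(−θ₀, I_d)`. -/
noncomputable def asymMix (d : ℕ) (θ₀ : EuclideanSpace ℝ (Fin d)) (m : ℝ) :
    Measure (EuclideanSpace ℝ (Fin d)) :=
  ENNReal.ofReal ((1 + m) / 2) • gaussian d θ₀ + ENNReal.ofReal ((1 - m) / 2) • gaussian d (-θ₀)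

/-!
Writing `m = tanh s` and `t = ⟪θ₀, x⟫`, the two component densities are `c(x) e^{±t}` and
`1 ± tanh s = e^{±s} / cosh s`, so the mixture density is `c(x) cosh(s + t) / cosh s`.
Multiplying it by `tanh(s + t)` turns it into `c(x) sinh(s + t) / cosh s`, the density of the
signed measure `((1+m)/2) N(θ₀) - ((1-m)/2) N(-θ₀)`. Hence the expectation is `(1+m)/2` times the
second moment of `N(θ₀, I)` minus `(1-m)/2` times that of `N(-θ₀, I)`, and both equal
`I + θ₀θ₀ᵀ`.
-/

open ProbabilityTheory Real

section WithDensity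

variable {α : Type*} [MeasurableSpace α] {μ : Measure α} {p : α → ℝ}

lemma integral_withDensity_ofReal (hp : Measurable p) (hp_nonneg : ∀ x, 0 ≤ p x) (g : α → ℝ) :
    ∫ x, g x ∂μ.withDensity (fun x => ENNReal.ofReal (p x)) = ∫ x, p x * g x ∂μ := by
  rw [integral_withDensity_eq_integral_toReal_smul (by fun_prop)
    (ae_of_all _ fun _ => ENNReal.ofReal_lt_top)]
  simp only [ENNReal.toReal_ofReal (hp_nonneg _), smul_eq_mul]

lemma integrable_withDensity_ofReal_iff (hp : Measurable p) (hp_nonneg : ∀ x, 0 ≤ p x)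
    {g : α → ℝ} :
    Integrable g (μ.withDensity fun x => ENNReal.ofReal (p x)) ↔
      Integrable (fun x => p x * g x) μ := by
  rw [integrable_withDensity_iff_integrable_smul' (by fun_prop)
    (ae_of_all _ fun _ => ENNReal.ofReal_lt_top)]
  simp only [ENNReal.toReal_ofReal (hp_nonneg _), smul_eq_mul]

end WithDensity

lemma lintegral_ofReal_prod_pi {ι : Type*} [Fintype ι] {E : ι → Type*}
    [∀ i, MeasurableSpace (E i)] {μ : ∀ i, Measure (E i)} [∀ i, SigmaFinite (μ i)]
    {g : ∀ i, E i → ℝ} (hg_nonneg : ∀ i x, 0 ≤ g i x) (hg : ∀ i, Integrable (g i) (μ i)) :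
    ∫⁻ x, ENNReal.ofReal (∏ i, g i (x i)) ∂Measure.pi μ =
      ∏ i, ∫⁻ x, ENNReal.ofReal (g i x) ∂μ i := by
  rw [← ofReal_integral_eq_lintegral_ofReal (Integrable.fintype_prod_dep hg)
      (ae_of_all _ fun x => Finset.prod_nonneg fun i _ => hg_nonneg i (x i)),
    integral_fintype_prod_eq_prod,
    ENNReal.ofReal_prod_of_nonneg fun i _ => integral_nonneg (hg_nonneg i)]
  exact Finset.prod_congr rfl fun i _ =>
    ofReal_integral_eq_lintegral_ofReal (hg i) (ae_of_all _ (hg_nonneg i))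

namespace ProbabilityTheory

variable {ι : Type*} [Fintype ι] [DecidableEq ι]

lemma multivariateGaussian_one_eq_map_pi (μ : EuclideanSpace ℝ ι) :
    multivariateGaussian μ 1 =
      (Measure.pi fun k => gaussianReal (μ k) 1).map (WithLp.toLp 2) := by
  have hshift : (fun k => gaussianReal (μ k) 1) = fun k => (gaussianReal 0 1).map (μ k + ·) := by
    ext1 k
    rw [gaussianReal_map_const_add, zero_add]
  rw [hshift, ← Measure.pi_map_pi (fun k => by fun_prop),
    Measure.map_map (by fun_prop) (by fun_prop)]
  simp only [multivariateGaussian, CFC.sqrt_one, map_one]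
  rw [← map_pi_eq_stdGaussian, Measure.map_map (by fun_prop) (by fun_prop)]
  rfl

variable {μ : EuclideanSpace ℝ ι} {S : Matrix ι ι ℝ}

lemma integral_eval_multivariateGaussian (hS : S.PosSemidef) (i : ι) :
    ∫ x, x i ∂multivariateGaussian μ S = μ i := by
  have h := measurePreserving_eval_multivariateGaussian (μ := μ) hS (i := i)
  rw [← integral_id_gaussianReal (μ := μ i) (v := (S i i).toNNReal), ← h.map_eq,
    integral_map h.measurable.aemeasurable (by fun_prop)]

lemma memLp_eval_multivariateGaussian (hS : S.PosSemidef) (i : ι) :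
    MemLp (fun x => x i) 2 (multivariateGaussian μ S) :=
  (memLp_id_gaussianReal 2).comp_measurePreserving
    (measurePreserving_eval_multivariateGaussian hS)

lemma integrable_mul_eval_multivariateGaussian (hS : S.PosSemidef) (i j : ι) :
    Integrable (fun x => x i * x j) (multivariateGaussian μ S) :=
  (memLp_eval_multivariateGaussian hS i).integrable_mul (memLp_eval_multivariateGaussian hS j)

lemma integral_mul_eval_multivariateGaussian (hS : S.PosSemidef) (i j : ι) :
    ∫ x, x i * x j ∂multivariateGaussian μ S = S i j + μ i * μ j := by
  have h := covariance_eq_sub (memLp_eval_multivariateGaussian (μ := μ) hS i)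
    (memLp_eval_multivariateGaussian hS j)
  rw [covariance_eval_multivariateGaussian hS, integral_eval_multivariateGaussian hS,
    integral_eval_multivariateGaussian hS] at h
  simp only [Pi.mul_apply] at h
  linarith

end ProbabilityTheory

noncomputable def gaussianDensity (d : ℕ) (μ x : EuclideanSpace ℝ (Fin d)) : ℝ :=
  (2 * π) ^ (-(d : ℝ) / 2) * exp (-‖x - μ‖ ^ 2 / 2)

section GaussianDensity

variable {d : ℕ}

lemma gaussian_eq_withDensity (μ : EuclideanSpace ℝ (Fin d)) :
    gaussian d μ = volume.withDensity fun x => ENNReal.ofReal (gaussianDensity d μ x) := rfl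

lemma gaussianDensity_nonneg (μ x : EuclideanSpace ℝ (Fin d)) : 0 ≤ gaussianDensity d μ x := by
  unfold gaussianDensity
  positivity

lemma measurable_gaussianDensity (μ : EuclideanSpace ℝ (Fin d)) :
    Measurable (gaussianDensity d μ) := by
  unfold gaussianDensity
  fun_prop

lemma gaussianDensity_eq_prod (μ x : EuclideanSpace ℝ (Fin d)) :
    gaussianDensity d μ x = ∏ k, gaussianPDFReal (μ k) 1 (x k) := by
  simp only [gaussianDensity, gaussianPDFReal, NNReal.coe_one, mul_one, Finset.prod_mul_distrib,
    Finset.prod_const, Finset.card_univ, Fintype.card_fin, ← exp_sum]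
  congr 1
  · rw [sqrt_eq_rpow, ← rpow_neg_one, ← rpow_mul (by positivity), ← rpow_natCast,
      ← rpow_mul (by positivity)]
    ring_nf
  · rw [EuclideanSpace.norm_sq_eq, ← Finset.sum_div, ← Finset.sum_neg_distrib]
    simp [sq_abs]

lemma gaussianDensity_eq_mul_exp_inner (μ x : EuclideanSpace ℝ (Fin d)) :
    gaussianDensity d μ x = gaussianDensity d 0 x * exp (⟪μ, x⟫ - ‖μ‖ ^ 2 / 2) := by
  rw [gaussianDensity, gaussianDensity, mul_assoc, ← exp_add, sub_zero, norm_sub_sq_real,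
    real_inner_comm]
  ring_nf

lemma integral_gaussian_eq (μ : EuclideanSpace ℝ (Fin d)) (g : EuclideanSpace ℝ (Fin d) → ℝ) :
    ∫ x, g x ∂gaussian d μ = ∫ x, gaussianDensity d μ x * g x :=
  integral_withDensity_ofReal (measurable_gaussianDensity μ) (gaussianDensity_nonneg μ) g

lemma integrable_gaussian_iff (μ : EuclideanSpace ℝ (Fin d)) {g : EuclideanSpace ℝ (Fin d) → ℝ} :
    Integrable g (gaussian d μ) ↔ Integrable (fun x => gaussianDensity d μ x * g x) :=
  integrable_withDensity_ofReal_iff (measurable_gaussianDensity μ) (gaussianDensity_nonneg μ)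

lemma gaussian_map_ofLp (μ : EuclideanSpace ℝ (Fin d)) :
    (gaussian d μ).map WithLp.ofLp = Measure.pi fun k => gaussianReal (μ k) 1 := by
  refine (Measure.pi_eq fun s hs => ?_).symm
  have hps : MeasurableSet (Set.univ.pi s) := MeasurableSet.univ_pi hs
  have hmeas : Measurable (WithLp.ofLp : EuclideanSpace ℝ (Fin d) → Fin d → ℝ) := by fun_prop
  rw [Measure.map_apply hmeas hps, gaussian_eq_withDensity, withDensity_apply _ (hmeas hps)]
  simp_rw [gaussianDensity_eq_prod]
  rw [(PiLp.volume_preserving_ofLp (Fin d)).setLIntegral_comp_preimage_emb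
      (MeasurableEquiv.toLp 2 (Fin d → ℝ)).symm.measurableEmbedding
      (fun y => ENNReal.ofReal (∏ k, gaussianPDFReal (μ k) 1 (y k))),
    volume_pi, Measure.restrict_pi_pi,
    lintegral_ofReal_prod_pi (fun k => gaussianPDFReal_nonneg _ _)
      (fun k => (integrable_gaussianPDFReal _ _).restrict)]
  exact Finset.prod_congr rfl fun k _ => (gaussianReal_apply _ one_ne_zero _).symm

lemma gaussian_eq_multivariateGaussian (μ : EuclideanSpace ℝ (Fin d)) :
    gaussian d μ = multivariateGaussian μ 1 := by
  rw [multivariateGaussian_one_eq_map_pi, ← gaussian_map_ofLp,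
    Measure.map_map (by fun_prop) (by fun_prop)]
  exact Measure.map_id.symm

lemma integrable_mul_eval_gaussian (μ : EuclideanSpace ℝ (Fin d)) (i j : Fin d) :
    Integrable (fun x => x i * x j) (gaussian d μ) := by
  rw [gaussian_eq_multivariateGaussian]
  exact integrable_mul_eval_multivariateGaussian Matrix.PosSemidef.one i j

lemma integral_mul_eval_gaussian (μ : EuclideanSpace ℝ (Fin d)) (i j : Fin d) :
    ∫ x, x i * x j ∂gaussian d μ = (if i = j then 1 else 0) + μ i * μ j := by
  rw [gaussian_eq_multivariateGaussian,
    integral_mul_eval_multivariateGaussian Matrix.PosSemidef.one, Matrix.one_apply]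

end GaussianDensity

lemma tanh_add_mul_exp_add (s t : ℝ) :
    tanh (s + t) * ((1 + tanh s) * exp t + (1 - tanh s) * exp (-t)) =
      (1 + tanh s) * exp t - (1 - tanh s) * exp (-t) := by
  simp only [tanh_eq, exp_neg, exp_add]
  have := exp_pos s
  have := exp_pos t
  field_simp
  ring

noncomputable def asymMixDensity (d : ℕ) (θ : EuclideanSpace ℝ (Fin d)) (m : ℝ)
    (x : EuclideanSpace ℝ (Fin d)) : ℝ :=
  (1 + m) / 2 * gaussianDensity d θ x + (1 - m) / 2 * gaussianDensity d (-θ) x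

section AsymMix

variable {d : ℕ} (θ : EuclideanSpace ℝ (Fin d))

lemma asymMixDensity_nonneg {m : ℝ} (hm : |m| ≤ 1) (x : EuclideanSpace ℝ (Fin d)) :
    0 ≤ asymMixDensity d θ m x := by
  obtain ⟨hm₁, hm₂⟩ := abs_le.mp hm
  exact add_nonneg (mul_nonneg (by linarith) (gaussianDensity_nonneg θ x))
    (mul_nonneg (by linarith) (gaussianDensity_nonneg (-θ) x))

lemma measurable_asymMixDensity (m : ℝ) : Measurable (asymMixDensity d θ m) := by
  unfold asymMixDensity
  have := measurable_gaussianDensity θ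
  have := measurable_gaussianDensity (-θ)
  fun_prop

lemma asymMix_eq_withDensity {m : ℝ} (hm : |m| ≤ 1) :
    asymMix d θ m = volume.withDensity fun x => ENNReal.ofReal (asymMixDensity d θ m x) := by
  obtain ⟨hm₁, hm₂⟩ := abs_le.mp hm
  have hp : 0 ≤ (1 + m) / 2 := by linarith
  have hn : 0 ≤ (1 - m) / 2 := by linarith
  have hmeas : Measurable fun x => ENNReal.ofReal (gaussianDensity d θ x) :=
    ENNReal.measurable_ofReal.comp (measurable_gaussianDensity θ)
  rw [asymMix, gaussian_eq_withDensity, gaussian_eq_withDensity,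
    ← withDensity_smul' _ _ ENNReal.ofReal_ne_top, ← withDensity_smul' _ _ ENNReal.ofReal_ne_top,
    ← withDensity_add_left (hmeas.const_smul _)]
  congr 1 with x
  rw [Pi.add_apply, Pi.smul_apply, Pi.smul_apply, smul_eq_mul, smul_eq_mul, asymMixDensity,
    ENNReal.ofReal_add (mul_nonneg hp (gaussianDensity_nonneg _ _))
      (mul_nonneg hn (gaussianDensity_nonneg _ _)), ENNReal.ofReal_mul hp, ENNReal.ofReal_mul hn]

lemma tanh_mul_asymMixDensity (s : ℝ) (x : EuclideanSpace ℝ (Fin d)) :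
    tanh (s + ⟪θ, x⟫) * asymMixDensity d θ (tanh s) x =
      (1 + tanh s) / 2 * gaussianDensity d θ x - (1 - tanh s) / 2 * gaussianDensity d (-θ) x := by
  rw [asymMixDensity, gaussianDensity_eq_mul_exp_inner θ, gaussianDensity_eq_mul_exp_inner (-θ),
    inner_neg_left, norm_neg]
  simp only [sub_eq_add_neg, exp_add]
  linear_combination (gaussianDensity d 0 x * exp (-(‖θ‖ ^ 2 / 2)) / 2) *
    tanh_add_mul_exp_add s ⟪θ, x⟫

lemma integral_mul_tanh_asymMix (s : ℝ) {f : EuclideanSpace ℝ (Fin d) → ℝ}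
    (hf : Integrable f (gaussian d θ)) (hf' : Integrable f (gaussian d (-θ))) :
    ∫ x, f x * tanh (s + ⟪θ, x⟫) ∂asymMix d θ (tanh s) =
      (1 + tanh s) / 2 * ∫ x, f x ∂gaussian d θ -
        (1 - tanh s) / 2 * ∫ x, f x ∂gaussian d (-θ) := by
  rw [asymMix_eq_withDensity θ (abs_tanh_lt_one s).le,
    integral_withDensity_ofReal (measurable_asymMixDensity θ _)
      (asymMixDensity_nonneg θ (abs_tanh_lt_one s).le),
    integral_gaussian_eq, integral_gaussian_eq, ← integral_const_mul, ← integral_const_mul,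
    ← integral_sub (((integrable_gaussian_iff θ).mp hf).const_mul _)
      (((integrable_gaussian_iff (-θ)).mp hf').const_mul _)]
  congr 1 with x
  linear_combination f x * tanh_mul_asymMixDensity θ s x

end AsymMix

theorem asymMix_xxT_tanh_mean_general (d : ℕ) (β m : ℝ) (θ₀ : EuclideanSpace ℝ (Fin d))
    (hfix : m = Real.tanh (β * m)) (i j : Fin d) :
    ∫ x, x i * x j * Real.tanh (β * m + ⟪θ₀, x⟫) ∂(asymMix d θ₀ m)
      = m * ((if i = j then (1 : ℝ) else 0) + θ₀ i * θ₀ j) := by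
  have h := integral_mul_tanh_asymMix θ₀ (β * m) (integrable_mul_eval_gaussian θ₀ i j)
    (integrable_mul_eval_gaussian (-θ₀) i j)
  rw [← hfix] at h
  rw [h, integral_mul_eval_gaussian, integral_mul_eval_gaussian, PiLp.neg_apply, PiLp.neg_apply]
  ring

/-- with `β > 1`, `m = tanh(βm)`, `m > 0` and `P_{θ₀}` the weighted mixture,
one has the matrix identity `E_{P_{θ₀}}[X Xᵀ tanh(βm + θ₀ᵀX)] = m(I_d + θ₀θ₀ᵀ)`
(stated entrywise). -/
theorem asymMix_xxT_tanh_mean (d : ℕ) (β m : ℝ) (θ₀ : EuclideanSpace ℝ (Fin d))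
    (hβ : 1 < β) (hm : 0 < m) (hfix : m = Real.tanh (β * m)) (i j : Fin d) :
    ∫ x, x i * x j * Real.tanh (β * m + ⟪θ₀, x⟫) ∂(asymMix d θ₀ m)
      = m * ((if i = j then (1 : ℝ) else 0) + θ₀ i * θ₀ j) :=
  asymMix_xxT_tanh_mean_general d β m θ₀ hfix i j
end

section
/- Fix β > 1, θ₀ ∈ ℝ^d \ {0}, m the positive root of m = tanh(βm), p = (1+m)/2. Define ν_z := E[X tanh(βm + θ₀ᵀX) | X ~ N_d(zθ₀, I_d)] for z = ±1 and α₁ := E_{P_{θ₀}}[X sech²(βm + θ₀ᵀX)]. Then α₁ = −((1 − m²)/2)(ν₁ − ν₋₁). -/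
open MeasureTheory
open scoped RealInnerProductSpace ENNReal

/-!
Both Gaussian densities are exponential tilts of the standard one,
`φ(x ∓ θ₀) = e^{-‖θ₀‖²/2} e^{±⟨θ₀,x⟩} φ(x)`. Writing `h = βm` and `u = ⟨θ₀,x⟩`, the fixed-point
relation `m = tanh h` turns the integrand of `α₁ + ((1 − m²)/2)(ν₁ − ν₋₁)` into
`(1 − m²) e^{-‖θ₀‖²/2} φ(x) cosh u · x`: after the tilt the weights `(1 ± m)/2` combine with
`e^{±u}` into `cosh(h + u)/cosh h`, and `cosh h + sinh u sinh(h + u) = cosh u cosh(h + u)`.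
This integrand is odd in `x`, so it integrates to zero.
-/

namespace Real

@[fun_prop]
lemma continuous_tanh : Continuous tanh := by
  simp_rw [funext tanh_eq_sinh_div_cosh]
  exact continuous_sinh.div continuous_cosh fun x => (cosh_pos x).ne'

lemma one_div_cosh_sq_le_one (t : ℝ) : (1 / cosh t) ^ 2 ≤ 1 := by
  rw [div_pow, one_pow, div_le_one (by positivity)]
  nlinarith [one_le_cosh t]

lemma sech_sq_add_tanh_mixture_eq (h u : ℝ) :
    ((1 + tanh h) / 2 * exp u + (1 - tanh h) / 2 * exp (-u)) * (1 / cosh (h + u)) ^ 2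
      + (1 - tanh h ^ 2) / 2 * (exp u - exp (-u)) * tanh (h + u)
      = (1 - tanh h ^ 2) * cosh u := by
  have hweights : (1 + tanh h) / 2 * exp u + (1 - tanh h) / 2 * exp (-u)
      = cosh u + tanh h * sinh u := by
    rw [cosh_eq, sinh_eq]; ring
  have hdiff : exp u - exp (-u) = 2 * sinh u := by rw [sinh_eq]; ring
  rw [hweights, hdiff]
  simp only [tanh_eq_sinh_div_cosh]
  field_simp
  rw [cosh_add, sinh_add, cosh_sq_sub_sinh_sq]
  linear_combination (-cosh h * (cosh h * cosh u + sinh h * sinh u)) * cosh_sq_sub_sinh_sq u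

lemma mul_exp_neg_sq_div_two_le (t : ℝ) : t * exp (-t ^ 2 / 2) ≤ exp (-t ^ 2 / 4) := by
  have h : t ≤ exp (t ^ 2 / 4) := by
    nlinarith [add_one_le_exp (t ^ 2 / 4), sq_nonneg (t / 2 - 1)]
  calc t * exp (-t ^ 2 / 2) ≤ exp (t ^ 2 / 4) * exp (-t ^ 2 / 2) := by gcongr
    _ = exp (-t ^ 2 / 4) := by rw [← exp_add]; ring_nf

end Real

lemma integral_eq_zero_of_odd {G F : Type*} [AddGroup G] [MeasurableSpace G] [MeasurableNeg G]
    [NormedAddCommGroup F] [NormedSpace ℝ F] (μ : Measure G) [μ.IsNegInvariant] {g : G → F}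
    (hg : ∀ x, g (-x) = -g x) :
    ∫ x, g x ∂μ = 0 := by
  have : IsAddTorsionFree F := .of_isTorsionFree ℝ F
  simp_rw [← self_eq_neg, ← integral_neg, ← hg, integral_neg_eq_self]

section InnerProductSpace

variable {V : Type*} [NormedAddCommGroup V] [InnerProductSpace ℝ V] [FiniteDimensional ℝ V]
  [MeasurableSpace V] [BorelSpace V]

lemma integrable_exp_neg_mul_sq_norm {b : ℝ} (hb : 0 < b) :
    Integrable (fun x : V => Real.exp (-b * ‖x‖ ^ 2)) := by
  simpa [Complex.norm_exp, ← Complex.ofReal_pow] using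
    (GaussianFourier.integrable_cexp_neg_mul_sq_norm_add (V := V) (b := (b : ℂ))
      (by simpa using hb) 0 0).norm

lemma integrable_exp_neg_sq_norm_div_two_smul_self :
    Integrable (fun x : V => Real.exp (-‖x‖ ^ 2 / 2) • x) := by
  refine (integrable_exp_neg_mul_sq_norm (V := V) (b := 1 / 4) (by norm_num)).mono'
    (by fun_prop) (.of_forall fun x => ?_)
  rw [norm_smul, Real.norm_of_nonneg (Real.exp_pos _).le, mul_comm]
  convert Real.mul_exp_neg_sq_div_two_le ‖x‖ using 2
  ring

end InnerProductSpace

namespace gaussian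

variable {d : ℕ}

noncomputable def density (d : ℕ) (μ x : EuclideanSpace ℝ (Fin d)) : ℝ :=
  (2 * Real.pi) ^ (-(d : ℝ) / 2) * Real.exp (-‖x - μ‖ ^ 2 / 2)

lemma density_nonneg (μ x : EuclideanSpace ℝ (Fin d)) : 0 ≤ density d μ x := by
  unfold density; positivity

@[fun_prop]
lemma continuous_density (μ : EuclideanSpace ℝ (Fin d)) : Continuous (density d μ) := by
  unfold density; fun_prop

lemma density_eq_mul_exp_inner (μ x : EuclideanSpace ℝ (Fin d)) :
    density d μ x = Real.exp (-‖μ‖ ^ 2 / 2) * Real.exp ⟪μ, x⟫ * density d 0 x := by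
  have h : -‖x - μ‖ ^ 2 / 2 = -‖μ‖ ^ 2 / 2 + ⟪μ, x⟫ + -‖x‖ ^ 2 / 2 := by
    rw [norm_sub_sq_real, real_inner_comm]; ring
  simp only [density, sub_zero, h, Real.exp_add]
  ring

lemma eq_withDensity_toNNReal (μ : EuclideanSpace ℝ (Fin d)) :
    gaussian d μ = volume.withDensity (fun x => ((density d μ x).toNNReal : ℝ≥0∞)) := rfl

variable {E : Type*} [NormedAddCommGroup E] [NormedSpace ℝ E]

lemma integral_eq (μ : EuclideanSpace ℝ (Fin d)) (f : EuclideanSpace ℝ (Fin d) → E) :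
    ∫ x, f x ∂gaussian d μ = ∫ x, density d μ x • f x := by
  rw [eq_withDensity_toNNReal, integral_withDensity_eq_integral_smul (by fun_prop)]
  simp_rw [NNReal.smul_def, Real.coe_toNNReal _ (density_nonneg μ _)]

lemma integrable_iff (μ : EuclideanSpace ℝ (Fin d)) {f : EuclideanSpace ℝ (Fin d) → E} :
    Integrable f (gaussian d μ) ↔ Integrable (fun x => density d μ x • f x) := by
  rw [eq_withDensity_toNNReal, integrable_withDensity_iff_integrable_smul (by fun_prop)]
  simp_rw [NNReal.smul_def, Real.coe_toNNReal _ (density_nonneg μ _)]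

lemma integrable_id (μ : EuclideanSpace ℝ (Fin d)) : Integrable id (gaussian d μ) := by
  have hstd :
      Integrable fun y : EuclideanSpace ℝ (Fin d) => Real.exp (-‖y‖ ^ 2 / 2) • (y + μ) := by
    simp_rw [smul_add]
    refine integrable_exp_neg_sq_norm_div_two_smul_self.add (Integrable.smul_const ?_ μ)
    simpa [neg_div, div_eq_inv_mul] using
      integrable_exp_neg_mul_sq_norm (V := EuclideanSpace ℝ (Fin d)) (b := 1 / 2) (by norm_num)
  rw [integrable_iff]
  refine ((hstd.comp_sub_right μ).smul ((2 * Real.pi) ^ (-(d : ℝ) / 2))).congr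
    (.of_forall fun x => ?_)
  simp [density, smul_smul]

lemma integrable_smul_self {c : EuclideanSpace ℝ (Fin d) → ℝ} (hc : Continuous c) {C : ℝ}
    (hC : ∀ x, |c x| ≤ C) (μ : EuclideanSpace ℝ (Fin d)) :
    Integrable (fun x => c x • x) (gaussian d μ) :=
  (integrable_id μ).bdd_smul (φ := c) C hc.aestronglyMeasurable
    (.of_forall fun x => (Real.norm_eq_abs _).trans_le (hC x))

open Real in
lemma mixture_smul_add_smul_eq_cosh_smul {h m : ℝ} (hm : m = tanh h)
    (θ x : EuclideanSpace ℝ (Fin d)) :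
    ((1 + m) / 2 * density d θ x + (1 - m) / 2 * density d (-θ) x)
        • (1 / cosh (h + ⟪θ, x⟫)) ^ 2 • x
      + ((1 - m ^ 2) / 2 * (density d θ x - density d (-θ) x)) • tanh (h + ⟪θ, x⟫) • x
      = ((1 - m ^ 2) * exp (-‖θ‖ ^ 2 / 2)) • density d 0 x • cosh ⟪θ, x⟫ • x := by
  rw [density_eq_mul_exp_inner θ, density_eq_mul_exp_inner (-θ), norm_neg, inner_neg_left, hm]
  match_scalars
  linear_combination (exp (-‖θ‖ ^ 2 / 2) * density d 0 x) * sech_sq_add_tanh_mixture_eq h ⟪θ, x⟫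

end gaussian

open gaussian in
lemma integral_asymMix_add_smul_sub {d : ℕ} {E : Type*} [NormedAddCommGroup E] [NormedSpace ℝ E]
    (θ : EuclideanSpace ℝ (Fin d)) {m : ℝ} (hm : |m| ≤ 1) (c : ℝ)
    {f g : EuclideanSpace ℝ (Fin d) → E} (hf : ∀ μ, Integrable f (gaussian d μ))
    (hg : ∀ μ, Integrable g (gaussian d μ)) :
    ∫ x, f x ∂asymMix d θ m + c • ((∫ x, g x ∂gaussian d θ) - ∫ x, g x ∂gaussian d (-θ))
      = ∫ x, ((1 + m) / 2 * density d θ x + (1 - m) / 2 * density d (-θ) x) • f x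
          + (c * (density d θ x - density d (-θ) x)) • g x := by
  have hf_vol (μ) := (gaussian.integrable_iff μ).1 (hf μ)
  have hg_vol (μ) := (gaussian.integrable_iff μ).1 (hg μ)
  have hexpand : (fun x => ((1 + m) / 2 * density d θ x + (1 - m) / 2 * density d (-θ) x) • f x
        + (c * (density d θ x - density d (-θ) x)) • g x)
      = fun x => ((1 + m) / 2) • density d θ x • f x + ((1 - m) / 2) • density d (-θ) x • f x
        + c • (density d θ x • g x - density d (-θ) x • g x) := by
    funext x
    module
  have hp : 0 ≤ (1 + m) / 2 := by linarith [abs_le.1 hm]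
  have hq : 0 ≤ (1 - m) / 2 := by linarith [abs_le.1 hm]
  rw [asymMix, integral_add_measure ((hf θ).smul_measure ENNReal.ofReal_ne_top)
    ((hf (-θ)).smul_measure ENNReal.ofReal_ne_top), integral_smul_measure, integral_smul_measure,
    ENNReal.toReal_ofReal hp, ENNReal.toReal_ofReal hq, hexpand, integral_add, integral_add,
    integral_smul, integral_smul, integral_smul, integral_sub (hg_vol _) (hg_vol _)]
  · simp only [gaussian.integral_eq]
  all_goals fun_prop

theorem alpha1_identity_general (d : ℕ) (β m : ℝ) (θ₀ : EuclideanSpace ℝ (Fin d))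
    (hfix : m = Real.tanh (β * m)) :
    ∫ x, (1 / Real.cosh (β * m + ⟪θ₀, x⟫)) ^ 2 • x ∂(asymMix d θ₀ m)
      = (-(1 - m ^ 2) / 2) •
        ((∫ x, Real.tanh (β * m + ⟪θ₀, x⟫) • x ∂(gaussian d θ₀))
          - ∫ x, Real.tanh (β * m + ⟪θ₀, x⟫) • x ∂(gaussian d (-θ₀))) := by
  have hm : |m| < 1 := hfix ▸ Real.abs_tanh_lt_one _
  have hsech (μ) :
      Integrable (fun x => (1 / Real.cosh (β * m + ⟪θ₀, x⟫)) ^ 2 • x) (gaussian d μ) :=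
    gaussian.integrable_smul_self
      ((continuous_const.div (by fun_prop) fun x => (Real.cosh_pos _).ne').pow 2)
      (fun x => (abs_of_nonneg (sq_nonneg _)).trans_le (Real.one_div_cosh_sq_le_one _)) μ
  have htanh (μ) : Integrable (fun x => Real.tanh (β * m + ⟪θ₀, x⟫) • x) (gaussian d μ) :=
    gaussian.integrable_smul_self (by fun_prop) (fun x => (Real.abs_tanh_lt_one _).le) μ
  have hodd : ∫ x, gaussian.density d 0 x • Real.cosh ⟪θ₀, x⟫ • x = 0 :=
    integral_eq_zero_of_odd volume fun x => by simp [gaussian.density]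
  have h := integral_asymMix_add_smul_sub θ₀ hm.le ((1 - m ^ 2) / 2) hsech htanh
  simp only [gaussian.mixture_smul_add_smul_eq_cosh_smul hfix, integral_smul, hodd,
    smul_zero] at h
  linear_combination (norm := module) h

/-- with `β > 1`, `θ₀ ≠ 0`, `m` the positive root of `m = tanh(βm)`,
`ν_z := E[X tanh(βm + θ₀ᵀX) | X ~ N_d(zθ₀, I_d)]` for `z = ±1`, and
`α₁ := E_{P_{θ₀}}[X sech²(βm + θ₀ᵀX)]`, one has `α₁ = −((1 − m²)/2)(ν₁ − ν₋₁)`. -/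
theorem alpha1_identity (d : ℕ) (β m : ℝ) (θ₀ : EuclideanSpace ℝ (Fin d))
    (hθ : θ₀ ≠ 0) (hβ : 1 < β) (hm : 0 < m) (hfix : m = Real.tanh (β * m)) :
    ∫ x, (1 / Real.cosh (β * m + ⟪θ₀, x⟫)) ^ 2 • x ∂(asymMix d θ₀ m)
      = (-(1 - m ^ 2) / 2) •
        ((∫ x, Real.tanh (β * m + ⟪θ₀, x⟫) • x ∂(gaussian d θ₀))
          - ∫ x, Real.tanh (β * m + ⟪θ₀, x⟫) • x ∂(gaussian d (-θ₀))) :=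
  alpha1_identity_general d β m θ₀ hfix
end
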